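/- arXiv:math/9907095 — 7 statements merged into one kernel-verified Lean document; each statement's English description precedes it below -/
import Mathlib

section
/- Let R, R′ be n×p integer matrices and S, S′ be p×n integer matrices such that R ≡ R′ (mod 4) and S ≡ S′ (mod 4) entrywise. Then sgc₂(R,S) = sgc₂(R′,S′) in ℤ/2ℤ; that is, sgc₂(R,S) depends only on the entries of R and S modulo 4. -/
/-!
The two quartic sums are integer polynomials in the entries, so modulo 2 they only see the
entries modulo 2. The diagonal term involves the triangular number `a(a-1)/2`, whose parity
depends on `a` modulo 4: `b(b-1) - a(a-1) = (b-a)(a+b-1)` is divisible by 4 when `4 ∣ b - a`.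
-/

/-- The sign-gyration polynomial `sgc₂` of a pair `(R, S)` of rectangular
integer matrices, with values in `ℤ/2ℤ`. -/
def sgc2 {n p : ℕ} (R : Matrix (Fin n) (Fin p) ℤ) (S : Matrix (Fin p) (Fin n) ℤ) : ZMod 2 :=
  (((∑ i : Fin n, ∑ j : Fin n, ∑ k : Fin p, ∑ l : Fin p,
      if i < j ∧ l < k then R i k * S k i * R j l * S l j else 0)
    + (∑ i : Fin n, ∑ j : Fin n, ∑ k : Fin p, ∑ l : Fin p,
      if i < j ∧ l ≤ k then R i k * S k j * R j l * S l i else 0)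
    + (∑ i : Fin n, ∑ k : Fin p, (R i k * (R i k - 1)) / 2 * (S k i) ^ 2) : ℤ) : ZMod 2)

theorem Int.ModEq.mul_sub_one_div_two {a b : ℤ} (h : a ≡ b [ZMOD 4]) :
    a * (a - 1) / 2 ≡ b * (b - 1) / 2 [ZMOD 2] := by
  have heven : 2 ∣ a * (a - 1) := (Int.even_mul_pred_self a).two_dvd
  have hdiff : 4 ∣ b * (b - 1) - a * (a - 1) := by
    obtain ⟨t, ht⟩ := h.dvd
    exact ⟨t * (a + b - 1), by linear_combination (a + b - 1) * ht⟩
  unfold Int.ModEq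
  omega

/-- `sgc₂(R,S)` depends only on the entries of `R` and `S` modulo 4. -/
theorem sgc2_depends_only_mod_four {n p : ℕ}
    (R R' : Matrix (Fin n) (Fin p) ℤ) (S S' : Matrix (Fin p) (Fin n) ℤ)
    (hR : ∀ i k, R i k ≡ R' i k [ZMOD 4]) (hS : ∀ k i, S k i ≡ S' k i [ZMOD 4]) :
    sgc2 R S = sgc2 R' S' := by
  have hR2 (i k) : R i k ≡ R' i k [ZMOD 2] := (hR i k).of_dvd (by norm_num)
  have hS2 (k i) : S k i ≡ S' k i [ZMOD 2] := (hS k i).of_dvd (by norm_num)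
  unfold sgc2
  rw [ZMod.intCast_eq_intCast_iff, Nat.cast_ofNat]
  gcongr with i _ j _ k _ l _ i _ j _ k _ l _ i _ k _
  · split_ifs <;> gcongr <;> apply_assumption
  · split_ifs <;> gcongr <;> apply_assumption
  · exact (hR i k).mul_sub_one_div_two
  · exact hS2 k i
end

section
/- Let A be an n×n integer matrix and B an m×m integer matrix which are strong shift equivalent over ℤ. Then sgc₂(−Iₙ, −A) = sgc₂(−Iₘ, −B) in ℤ/2ℤ, where Iₙ and Iₘ denote identity matrices. -/
/-- A strong shift equivalence (chain of elementary strong shift equivalences)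
over a semiring `Λ`, consisting of `k` elementary steps. -/
structure SSEChain (Λ : Type) [Semiring Λ] (k : ℕ) where
  size : Fin (k + 1) → ℕ
  mat : ∀ i : Fin (k + 1), Matrix (Fin (size i)) (Fin (size i)) Λ
  R : ∀ i : Fin k, Matrix (Fin (size i.castSucc)) (Fin (size i.succ)) Λ
  S : ∀ i : Fin k, Matrix (Fin (size i.succ)) (Fin (size i.castSucc)) Λ
  hR : ∀ i : Fin k, mat i.castSucc = R i * S i
  hS : ∀ i : Fin k, mat i.succ = S i * R i

/-- The chain `c` is a strong shift equivalence from `A` to `B`. -/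
def SSEChain.From {Λ : Type} [Semiring Λ] {k n m : ℕ} (c : SSEChain Λ k)
    (A : Matrix (Fin n) (Fin n) Λ) (B : Matrix (Fin m) (Fin m) Λ) : Prop :=
  ∃ (h0 : c.size 0 = n) (h1 : c.size (Fin.last k) = m),
    Matrix.reindex (finCongr h0) (finCongr h0) (c.mat 0) = A ∧
    Matrix.reindex (finCongr h1) (finCongr h1) (c.mat (Fin.last k)) = B

lemma sq_self_zmod2 : ∀ x : ZMod 2, x ^ 2 = x := by decide

/-- `sgc₂(−I, −A)` is just the trace of `A` mod 2. -/
lemma sgc2_neg_one {n : ℕ} (A : Matrix (Fin n) (Fin n) ℤ) :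
    sgc2 (-(1 : Matrix (Fin n) (Fin n) ℤ)) (-A) = ((Matrix.trace A : ℤ) : ZMod 2) := by
  unfold sgc2
  have e1 : (∑ i : Fin n, ∑ j : Fin n, ∑ k : Fin n, ∑ l : Fin n,
      if i < j ∧ l < k then (-(1:Matrix (Fin n) (Fin n) ℤ)) i k * (-A) k i *
        (-(1:Matrix (Fin n) (Fin n) ℤ)) j l * (-A) l j else 0) = 0 := by
    apply Finset.sum_eq_zero; intro i _
    apply Finset.sum_eq_zero; intro j _
    apply Finset.sum_eq_zero; intro k _
    apply Finset.sum_eq_zero; intro l _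
    by_cases hik : i = k
    · by_cases hjl : j = l
      · subst hik; subst hjl
        rw [if_neg]
        rintro ⟨h1, h2⟩
        exact absurd h2 (not_lt.2 h1.le)
      · simp [Matrix.one_apply, hjl]
    · simp [Matrix.one_apply, hik]
  have e2 : (∑ i : Fin n, ∑ j : Fin n, ∑ k : Fin n, ∑ l : Fin n,
      if i < j ∧ l ≤ k then (-(1:Matrix (Fin n) (Fin n) ℤ)) i k * (-A) k j *
        (-(1:Matrix (Fin n) (Fin n) ℤ)) j l * (-A) l i else 0) = 0 := by
    apply Finset.sum_eq_zero; intro i _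
    apply Finset.sum_eq_zero; intro j _
    apply Finset.sum_eq_zero; intro k _
    apply Finset.sum_eq_zero; intro l _
    by_cases hik : i = k
    · by_cases hjl : j = l
      · subst hik; subst hjl
        rw [if_neg]
        rintro ⟨h1, h2⟩
        exact absurd (lt_of_lt_of_le h1 h2) (lt_irrefl i)
      · simp [Matrix.one_apply, hjl]
    · simp [Matrix.one_apply, hik]
  have e3 : (∑ i : Fin n, ∑ k : Fin n,
      ((-(1:Matrix (Fin n) (Fin n) ℤ)) i k * ((-(1:Matrix (Fin n) (Fin n) ℤ)) i k - 1)) / 2 *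
        ((-A) k i) ^ 2) = ∑ i : Fin n, (A i i) ^ 2 := by
    apply Finset.sum_congr rfl; intro i _
    rw [Finset.sum_eq_single i]
    · simp [Matrix.one_apply]
    · intro k _ hk
      simp [Matrix.one_apply, (Ne.symm hk : ¬ i = k)]
    · simp
  rw [e1, e2, e3, Matrix.trace]
  push_cast
  simp only [Matrix.diag_apply, sq_self_zmod2, zero_add]

lemma chain_trace {k : ℕ} (c : SSEChain ℤ k) (i : Fin (k + 1)) :
    (c.mat i).trace = (c.mat 0).trace := by
  induction i using Fin.induction with
  | zero => rfl
  | succ j ih =>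
    rw [c.hS j, Matrix.trace_mul_comm, ← c.hR j]
    exact ih

lemma trace_reindex' {a b : ℕ} (h : a = b) (M : Matrix (Fin a) (Fin a) ℤ) :
    (Matrix.reindex (finCongr h) (finCongr h) M).trace = M.trace := by
  subst h; simp

/-- If `A` and `B` are strong shift equivalent over `ℤ`, then
`sgc₂(−Iₙ, −A) = sgc₂(−Iₘ, −B)`. -/
theorem sgc2_neg_one_invariant_of_SSE {n m : ℕ}
    (A : Matrix (Fin n) (Fin n) ℤ) (B : Matrix (Fin m) (Fin m) ℤ)
    (h : ∃ (k : ℕ) (c : SSEChain ℤ k), c.From A B) :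
    sgc2 (-(1 : Matrix (Fin n) (Fin n) ℤ)) (-A)
      = sgc2 (-(1 : Matrix (Fin m) (Fin m) ℤ)) (-B) := by
  obtain ⟨k, c, h0, h1, hA, hB⟩ := h
  rw [sgc2_neg_one, sgc2_neg_one, ← hA, ← hB, trace_reindex', trace_reindex',
    chain_trace c (Fin.last k)]
end

section
/- Let R be an n×p matrix and S a p×n matrix, both with nonnegative integer entries, and suppose that the square matrix A = RS satisfies tr(A) = 0 and tr(A²) = 0 (so the associated shifts of finite type have no points of period one or two). Then sgc₂(R,S) = 0 in ℤ/2ℤ. -/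
/-- If `R` and `S` are nonnegative and `A = RS` satisfies `tr(A) = tr(A²) = 0`,
then `sgc₂(R,S) = 0`. -/
theorem sgc2_eq_zero_of_nonneg_of_trace_zero {n p : ℕ}
    (R : Matrix (Fin n) (Fin p) ℤ) (S : Matrix (Fin p) (Fin n) ℤ)
    (hR : ∀ i k, 0 ≤ R i k) (hS : ∀ k i, 0 ≤ S k i)
    (htr : Matrix.trace (R * S) = 0)
    (htr2 : Matrix.trace ((R * S) * (R * S)) = 0) :
    sgc2 R S = 0 := by
  have h1 : ∀ i k, R i k * S k i = 0 := by
    have h : ∑ i : Fin n, ∑ k : Fin p, R i k * S k i = 0 := by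
      simpa [Matrix.trace, Matrix.mul_apply, Matrix.diag] using htr
    intro i k
    have hi := (Finset.sum_eq_zero_iff_of_nonneg (fun i _ =>
      Finset.sum_nonneg fun k _ => mul_nonneg (hR i k) (hS k i))).mp h i (Finset.mem_univ i)
    exact (Finset.sum_eq_zero_iff_of_nonneg (fun k _ =>
      mul_nonneg (hR i k) (hS k i))).mp hi k (Finset.mem_univ k)
  have h2 : ∀ i j : Fin n, ∀ k l : Fin p, R i k * S k j * (R j l * S l i) = 0 := by
    have h : ∑ i : Fin n, ∑ j : Fin n, ∑ k : Fin p, ∑ l : Fin p,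
        R i k * S k j * (R j l * S l i) = 0 := by
      have e : Matrix.trace ((R * S) * (R * S)) =
          ∑ i : Fin n, ∑ j : Fin n, ∑ k : Fin p, ∑ l : Fin p,
            R i k * S k j * (R j l * S l i) := by
        simp only [Matrix.trace, Matrix.diag, Matrix.mul_apply, Finset.sum_mul,
          Finset.mul_sum]
        refine Finset.sum_congr rfl fun i _ => Finset.sum_congr rfl fun j _ => ?_
        rw [Finset.sum_comm]
      rw [e] at htr2; exact htr2
    intro i j k l
    have nn : ∀ (i j : Fin n) (k l : Fin p), (0:ℤ) ≤ R i k * S k j * (R j l * S l i) :=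
      fun i j k l => mul_nonneg (mul_nonneg (hR i k) (hS k j))
        (mul_nonneg (hR j l) (hS l i))
    have hi := (Finset.sum_eq_zero_iff_of_nonneg (fun i _ => Finset.sum_nonneg fun j _ =>
      Finset.sum_nonneg fun k _ => Finset.sum_nonneg fun l _ => nn i j k l)).mp h
      i (Finset.mem_univ i)
    have hj := (Finset.sum_eq_zero_iff_of_nonneg (fun j _ =>
      Finset.sum_nonneg fun k _ => Finset.sum_nonneg fun l _ => nn i j k l)).mp hi
      j (Finset.mem_univ j)
    have hk := (Finset.sum_eq_zero_iff_of_nonneg (fun k _ =>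
      Finset.sum_nonneg fun l _ => nn i j k l)).mp hj k (Finset.mem_univ k)
    exact (Finset.sum_eq_zero_iff_of_nonneg (fun l _ => nn i j k l)).mp hk
      l (Finset.mem_univ l)
  unfold sgc2
  have e1 : (∑ i : Fin n, ∑ j : Fin n, ∑ k : Fin p, ∑ l : Fin p,
      if i < j ∧ l < k then R i k * S k i * R j l * S l j else 0) = (0:ℤ) := by
    refine Finset.sum_eq_zero fun i _ => Finset.sum_eq_zero fun j _ =>
      Finset.sum_eq_zero fun k _ => Finset.sum_eq_zero fun l _ => ?_
    split
    · rw [show R i k * S k i * R j l * S l j = (R i k * S k i) * (R j l * S l j) by ring,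
        h1 i k, zero_mul]
    · rfl
  have e2 : (∑ i : Fin n, ∑ j : Fin n, ∑ k : Fin p, ∑ l : Fin p,
      if i < j ∧ l ≤ k then R i k * S k j * R j l * S l i else 0) = (0:ℤ) := by
    refine Finset.sum_eq_zero fun i _ => Finset.sum_eq_zero fun j _ =>
      Finset.sum_eq_zero fun k _ => Finset.sum_eq_zero fun l _ => ?_
    split
    · rw [show R i k * S k j * R j l * S l i = R i k * S k j * (R j l * S l i) by ring,
        h2 i j k l]
    · rfl
  have e3 : (∑ i : Fin n, ∑ k : Fin p, (R i k * (R i k - 1)) / 2 * (S k i) ^ 2) = (0:ℤ) := by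
    refine Finset.sum_eq_zero fun i _ => Finset.sum_eq_zero fun k _ => ?_
    rcases mul_eq_zero.mp (h1 i k) with h | h
    · rw [h]; norm_num
    · rw [h]; ring
  rw [e1, e2, e3]
  norm_num
end

section
/- Let A and B be square matrices with nonnegative integer entries such that tr(A) = 0 and tr(A²) = 0. Then for every strong shift equivalence over ℕ from A to B, given by elementary strong shift equivalences (R₁,S₁), …, (R_k,S_k), the sum Σ_{i=1}^{k} sgc₂(Rᵢ,Sᵢ) equals 0 in ℤ/2ℤ. -/
/-!
Over `ℕ` a vanishing trace of `R * S` kills every diagonal term `R i k * S k i`, and a vanishing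
trace of `(R * S) ^ 2` kills every product `R i k * S k j * R j l * S l i`; these are exactly the
monomials of `sgc₂ (R, S)`. Since `tr (M ^ (j + 1))` is invariant under strong shift equivalence,
both traces vanish at every step of the chain, so every `sgc₂` term of the sum is already `0`.
-/

namespace Matrix

variable {m n α : Type*} [Fintype m] [Fintype n]

theorem mul_apply_eq_zero_of_trace_mul_eq_zero [NonUnitalNonAssocSemiring α]
    [Subsingleton (AddUnits α)] {R : Matrix m n α} {S : Matrix n m α}
    (h : trace (R * S) = 0) (i : m) (k : n) : R i k * S k i = 0 :=
  Finset.sum_eq_zero_iff.mp (Finset.sum_eq_zero_iff.mp h i (Finset.mem_univ i)) k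
    (Finset.mem_univ k)

theorem mul_apply_mul_eq_zero_of_trace_sq_eq_zero [Semiring α] [NoZeroDivisors α]
    [Subsingleton (AddUnits α)] [DecidableEq m] {R : Matrix m n α} {S : Matrix n m α}
    (h : trace ((R * S) ^ 2) = 0) (i j : m) (k l : n) :
    R i k * S k j * (R j l * S l i) = 0 := by
  rw [sq] at h
  have hij : (R * S) i j * (R * S) j i = 0 := mul_apply_eq_zero_of_trace_mul_eq_zero h i j
  rcases mul_eq_zero.mp hij with hRS_ij | hRS_ji
  · rw [Finset.sum_eq_zero_iff.mp hRS_ij k (Finset.mem_univ k), zero_mul]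
  · rw [Finset.sum_eq_zero_iff.mp hRS_ji l (Finset.mem_univ l), mul_zero]

theorem mul_pow_mul_eq_mul_mul_pow [Semiring α] [DecidableEq m] [DecidableEq n]
    (R : Matrix m n α) (S : Matrix n m α) (j : ℕ) : (S * R) ^ j * S = S * (R * S) ^ j := by
  induction j with
  | zero => simp
  | succ j ih => rw [pow_succ, pow_succ, Matrix.mul_assoc, Matrix.mul_assoc S R S,
      ← Matrix.mul_assoc _ S, ih, Matrix.mul_assoc]

theorem trace_mul_pow_succ_comm [CommSemiring α] [DecidableEq m] [DecidableEq n]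
    (R : Matrix m n α) (S : Matrix n m α) (j : ℕ) :
    trace ((S * R) ^ (j + 1)) = trace ((R * S) ^ (j + 1)) := by
  rw [pow_succ, ← Matrix.mul_assoc, mul_pow_mul_eq_mul_mul_pow, Matrix.mul_assoc, trace_mul_comm,
    pow_succ, Matrix.mul_assoc]

end Matrix

theorem SSEChain.trace_mat_pow_succ {α : Type} [CommSemiring α] {k : ℕ} (c : SSEChain α k)
    (j : ℕ) (i : Fin (k + 1)) : (c.mat i ^ (j + 1)).trace = (c.mat 0 ^ (j + 1)).trace := by
  induction i using Fin.induction with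
  | zero => rfl
  | succ i ih => rw [c.hS, Matrix.trace_mul_pow_succ_comm, ← c.hR, ih]

theorem sgc2_map_natCast_eq_zero_of_trace_eq_zero {n p : ℕ} (R : Matrix (Fin n) (Fin p) ℕ)
    (S : Matrix (Fin p) (Fin n) ℕ) (h1 : (R * S).trace = 0) (h2 : ((R * S) ^ 2).trace = 0) :
    sgc2 (R.map (Nat.cast : ℕ → ℤ)) (S.map (Nat.cast : ℕ → ℤ)) = 0 := by
  have hRS : ∀ i k, (R i k : ℤ) * S k i = 0 := fun i k => by
    exact_mod_cast Matrix.mul_apply_eq_zero_of_trace_mul_eq_zero h1 i k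
  have hRSRS : ∀ i j k l, (R i k : ℤ) * S k j * R j l * S l i = 0 := fun i j k l => by
    rw [mul_assoc _ (R j l : ℤ)]
    exact_mod_cast Matrix.mul_apply_mul_eq_zero_of_trace_sq_eq_zero h2 i j k l
  have hdiag : ∀ i k, ((R i k : ℤ) * (R i k - 1)) / 2 * S k i ^ 2 = 0 := fun i k => by
    rcases mul_eq_zero.mp (hRS i k) with h | h <;> simp [h]
  simp [sgc2, hRS, hRSRS, hdiag]

/-- If `A`, `B` are nonnegative integer matrices with `tr(A) = tr(A²) = 0`, then
for every strong shift equivalence over `ℕ` from `A` to `B`, the sum of the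
`sgc₂` of the elementary steps vanishes. -/
theorem sum_sgc2_eq_zero_of_SSE_over_N {n m : ℕ}
    (A : Matrix (Fin n) (Fin n) ℕ) (B : Matrix (Fin m) (Fin m) ℕ)
    (htr : Matrix.trace A = 0) (htr2 : Matrix.trace (A ^ 2) = 0)
    (k : ℕ) (c : SSEChain ℕ k) (hc : c.From A B) :
    ∑ i : Fin k, sgc2 ((c.R i).map (Nat.cast : ℕ → ℤ)) ((c.S i).map (Nat.cast : ℕ → ℤ)) = 0 := by
  obtain ⟨rfl, -, rfl, -⟩ := hc
  simp only [finCongr_refl, Matrix.reindex_refl_refl] at htr htr2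
  refine Finset.sum_eq_zero fun i _ => sgc2_map_natCast_eq_zero_of_trace_eq_zero _ _ ?_ ?_
  · simpa [← c.hR, htr] using c.trace_mat_pow_succ 0 i.castSucc
  · simpa [← c.hR, htr2] using c.trace_mat_pow_succ 1 i.castSucc
end

section
/- Let p(X) = X⁷ − 23X⁴ − 28X³ − 33X² − 17X + 1 and let K = ℚ[X]/(p(X)) be the number field obtained by adjoining a root of p. Then K has exactly 3 real embeddings and exactly 2 pairs of complex conjugate embeddings, so by Dirichlet's Unit Theorem the unit group of the ring of integers 𝒪_K has rank 4. -/
open Polynomial NumberField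

/-- The polynomial `p(X) = X⁷ − 23X⁴ − 28X³ − 33X² − 17X + 1` over `ℚ`. -/
noncomputable def pQ : Polynomial ℚ :=
  X ^ 7 - 23 * X ^ 4 - 28 * X ^ 3 - 33 * X ^ 2 - 17 * X + 1

/-!
Real embeddings of `ℚ[X]/(f)` are the real roots of `f`, so `r₁` is the number of real roots of
`p`. By the intermediate value theorem `p` has a root in each of `(-1, 0)`, `(0, 1)`, `(1, 4)`;
by Rolle's theorem it has at most two more real roots than `p''`, and `p''` has at most one,
since all its real roots lie in `(2, ∞)` where it is increasing. Then `r₁ + 2 r₂ = 7` gives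
`r₂ = 2`, and the unit rank is `r₁ + r₂ - 1 = 4`.
-/

namespace NumberField

variable (K : Type*) [Field K]

noncomputable def realEmbeddingsEquiv :
    {φ : K →+* ℂ // ComplexEmbedding.IsReal φ} ≃ (K →+* ℝ) where
  toFun φ := φ.2.embedding
  invFun ψ := ⟨Complex.ofRealHom.comp ψ, by
    rw [ComplexEmbedding.isReal_iff]; ext x; simp⟩
  left_inv φ := Subtype.ext <| RingHom.ext φ.2.coe_embedding_apply
  right_inv ψ := by ext x; simp [ComplexEmbedding.IsReal.embedding]

variable {K}

theorem nrRealPlaces_eq_card_aroots_of_algEquiv_adjoinRoot [NumberField K] {f : ℚ[X]}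
    (hf : f ≠ 0) (e : K ≃ₐ[ℚ] AdjoinRoot f) :
    InfinitePlace.nrRealPlaces K = (f.aroots ℝ).toFinset.card := by
  classical
  rw [← InfinitePlace.card_real_embeddings, ← Fintype.card_coe]
  refine Fintype.card_congr <| (realEmbeddingsEquiv K).trans <|
    (RingHom.equivRatAlgHom K ℝ).trans <|
    ((AlgEquiv.arrowCongr e AlgEquiv.refl).trans (AdjoinRoot.equiv ℝ ℚ f hf)).trans <|
    Equiv.subtypeEquivRight fun x => ?_
  rw [Multiset.mem_toFinset]

theorem finrank_eq_natDegree_of_algEquiv_adjoinRoot [Algebra ℚ K] {f : ℚ[X]} (hf : f ≠ 0)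
    (e : K ≃ₐ[ℚ] AdjoinRoot f) : Module.finrank ℚ K = f.natDegree :=
  e.toLinearEquiv.finrank_eq.trans (AdjoinRoot.powerBasis hf).finrank

end NumberField

namespace Polynomial

theorem exists_mem_Ioo_isRoot_of_eval_mul_eval_neg {f : ℝ[X]} {a b : ℝ} (hab : a ≤ b)
    (h : f.eval a * f.eval b < 0) : ∃ x ∈ Set.Ioo a b, f.IsRoot x := by
  rcases mul_neg_iff.1 h with ⟨ha, hb⟩ | ⟨ha, hb⟩
  · exact intermediate_value_Ioo' hab f.continuous.continuousOn ⟨hb, ha⟩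
  · exact intermediate_value_Ioo hab f.continuous.continuousOn ⟨ha, hb⟩

theorem card_roots_toFinset_le_one_of_strictMonoOn {f : ℝ[X]} {s : Set ℝ}
    (hmono : StrictMonoOn (fun x => f.eval x) s) (hroots : ∀ x, f.IsRoot x → x ∈ s) :
    f.roots.toFinset.card ≤ 1 := by
  refine Finset.card_le_one.2 fun a ha b hb => ?_
  rw [Multiset.mem_toFinset, mem_roots'] at ha hb
  exact hmono.injOn (hroots a ha.2) (hroots b hb.2) (ha.2.trans hb.2.symm)

end Polynomial

noncomputable def pR : ℝ[X] :=
  X ^ 7 - 23 * X ^ 4 - 28 * X ^ 3 - 33 * X ^ 2 - 17 * X + 1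

theorem pQ_ne_zero : pQ ≠ 0 := by
  have : pQ.Monic := by unfold pQ; monicity!
  exact this.ne_zero

theorem pQ_natDegree : pQ.natDegree = 7 := by unfold pQ; compute_degree!

theorem pQ_map_real : pQ.map (algebraMap ℚ ℝ) = pR := by
  simp [pQ, pR, Polynomial.map_ofNat]

theorem pR_eval (x : ℝ) : pR.eval x = x ^ 7 - 23 * x ^ 4 - 28 * x ^ 3 - 33 * x ^ 2 - 17 * x + 1 := by
  simp [pR]

theorem derivative_derivative_pR :
    derivative (derivative pR) = 42 * X ^ 5 - 276 * X ^ 2 - 168 * X - 66 := by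
  simp [pR, derivative_pow, map_ofNat]
  ring

theorem card_roots_derivative_derivative_pR_le_one :
    (derivative (derivative pR)).roots.toFinset.card ≤ 1 := by
  rw [derivative_derivative_pR]
  refine card_roots_toFinset_le_one_of_strictMonoOn (s := Set.Ici 2) ?_ fun y hy => ?_
  · refine strictMonoOn_of_deriv_pos (convex_Ici 2) (Polynomial.continuousOn _) fun x hx => ?_
    rw [interior_Ici, Set.mem_Ioi] at hx
    have h3 : 8 ≤ x ^ 3 := by nlinarith [mul_pos (mul_pos (sub_pos.2 hx) (sub_pos.2 hx)) (sub_pos.2 hx)]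
    have hderiv : (derivative (42 * X ^ 5 - 276 * X ^ 2 - 168 * X - 66 : ℝ[X])).eval x =
        210 * x ^ 4 - 552 * x - 168 := by
      simp [derivative_pow, map_ofNat]
      ring
    rw [Polynomial.deriv, hderiv]
    nlinarith [mul_le_mul_of_nonneg_right h3 (by linarith : (0 : ℝ) ≤ x)]
  · simp only [IsRoot, eval_sub, eval_mul, eval_pow, eval_X, eval_ofNat] at hy
    rw [Set.mem_Ici]
    by_contra! h
    rcases le_or_gt y 0 with h0 | h0
    · nlinarith [mul_nonneg (neg_nonneg.2 h0) (sq_nonneg (y ^ 2)), sq_nonneg (23 * y + 7)]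
    · have h3 : y ^ 3 ≤ 8 := by nlinarith
      nlinarith [mul_le_mul_of_nonneg_right h3 (sq_nonneg y)]

theorem three_le_card_roots_pR : 3 ≤ pR.roots.toFinset.card := by
  have pR_ne_zero : pR ≠ 0 := by rw [← pQ_map_real]; exact (Polynomial.map_ne_zero pQ_ne_zero)
  obtain ⟨x₁, ⟨-, hx₁⟩, hr₁⟩ := exists_mem_Ioo_isRoot_of_eval_mul_eval_neg (f := pR)
    (by norm_num : (-1 : ℝ) ≤ 0) (by rw [pR_eval, pR_eval]; norm_num)
  obtain ⟨x₂, ⟨hx₂, hx₂'⟩, hr₂⟩ := exists_mem_Ioo_isRoot_of_eval_mul_eval_neg (f := pR)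
    (by norm_num : (0 : ℝ) ≤ 1) (by rw [pR_eval, pR_eval]; norm_num)
  obtain ⟨x₃, ⟨hx₃, -⟩, hr₃⟩ := exists_mem_Ioo_isRoot_of_eval_mul_eval_neg (f := pR)
    (by norm_num : (1 : ℝ) ≤ 4) (by rw [pR_eval, pR_eval]; norm_num)
  have hcard : ({x₁, x₂, x₃} : Finset ℝ).card = 3 :=
    Finset.card_eq_three.2 ⟨x₁, x₂, x₃, by linarith, by linarith, by linarith, rfl⟩
  refine hcard ▸ Finset.card_le_card fun y hy => ?_
  rw [Multiset.mem_toFinset, mem_roots pR_ne_zero]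
  simp only [Finset.mem_insert, Finset.mem_singleton] at hy
  rcases hy with rfl | rfl | rfl <;> assumption

theorem card_roots_pR : pR.roots.toFinset.card = 3 := by
  have h₁ := card_roots_toFinset_le_derivative pR
  have h₂ := card_roots_toFinset_le_derivative (derivative pR)
  have := card_roots_derivative_derivative_pR_le_one
  have := three_le_card_roots_pR
  omega

/-- The number field `K = ℚ[X]/(p(X))` has exactly 3 real embeddings and
exactly 2 pairs of complex conjugate embeddings, so by Dirichlet's Unit
Theorem its unit group has rank 4. -/
theorem nrRealPlaces_nrComplexPlaces_unitsRank
    (K : Type) [Field K] [NumberField K] (e : K ≃ₐ[ℚ] AdjoinRoot pQ) :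
    InfinitePlace.nrRealPlaces K = 3 ∧ InfinitePlace.nrComplexPlaces K = 2 ∧
      Units.rank K = 4 := by
  have hR : InfinitePlace.nrRealPlaces K = 3 := by
    rw [nrRealPlaces_eq_card_aroots_of_algEquiv_adjoinRoot pQ_ne_zero e, aroots_def, pQ_map_real,
      card_roots_pR]
  have hC : InfinitePlace.nrComplexPlaces K = 2 := by
    have hsum := InfinitePlace.card_add_two_mul_card_eq_rank K
    rw [finrank_eq_natDegree_of_algEquiv_adjoinRoot pQ_ne_zero e, pQ_natDegree, hR] at hsum
    omega
  refine ⟨hR, hC, ?_⟩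
  rw [Units.rank, InfinitePlace.card_eq_nrRealPlaces_add_nrComplexPlaces, hR, hC]
end

section
/- Let p(X) = X⁷ − 23X⁴ − 28X³ − 33X² − 17X + 1, let K = ℚ[X]/(p(X)) with θ the image of X, and let f₁, f₂, f₃, f₄ be the rational polynomials given in the context. Then each of f₁(θ), f₂(θ), f₃(θ), f₄(θ) is a unit of the ring of integers 𝒪_K; that is, each fᵢ(θ) is an algebraic integer whose multiplicative inverse is also an algebraic integer. -/
open Polynomial NumberField

noncomputable def f₁ : Polynomial ℚ := X

noncomputable def f₂ : Polynomial ℚ :=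
  C (1/3 : ℚ) * (38 * X ^ 6 + 2 * X ^ 5 - X ^ 4 - 872 * X ^ 3
    - 1108 * X ^ 2 - 1309 * X - 713)

noncomputable def f₃ : Polynomial ℚ :=
  C (1/3 : ℚ) * (842 * X ^ 6 + 5072 * X ^ 5 - 6847 * X ^ 4 - 46061 * X ^ 3
    - 34930 * X ^ 2 - 52216 * X + 2878)

noncomputable def f₄ : Polynomial ℚ :=
  C (1/3 : ℚ) * (4260971 * X ^ 6 - 3124108 * X ^ 5 + 2290532 * X ^ 4
    - 99681839 * X ^ 3 - 46221667 * X ^ 2 - 106722952 * X + 5811547)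

set_option maxHeartbeats 4000000 in
/-- In the number field `K = ℚ[X]/(p(X))` with `θ` the image of `X`, each of
`f₁(θ), f₂(θ), f₃(θ), f₄(θ)` is a unit of the ring of integers: an algebraic
integer whose multiplicative inverse is also an algebraic integer. -/
theorem f_of_theta_are_units
    (K : Type) [Field K] [NumberField K] (e : K ≃ₐ[ℚ] AdjoinRoot pQ)
    (θ : K) (hθ : e θ = AdjoinRoot.root pQ) :
    ∀ f ∈ [f₁, f₂, f₃, f₄],
      IsIntegral ℤ (Polynomial.aeval θ f) ∧
        IsIntegral ℤ (Polynomial.aeval θ f)⁻¹ := by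
  intro f hf
  have hpθ : θ^7 - 23*θ^4 - 28*θ^3 - 33*θ^2 - 17*θ + 1 = 0 := by
    have h : aeval θ pQ = 0 := by
      apply e.injective
      rw [map_zero, ← Polynomial.aeval_algHom_apply, hθ, AdjoinRoot.aeval_eq, AdjoinRoot.mk_self]
    simpa [pQ, map_ofNat] using h
  simp only [List.mem_cons, List.not_mem_nil, or_false] at hf
  rcases hf with rfl | rfl | rfl | rfl
  · -- f1
    have hx : aeval θ f₁ = (1 : K) * θ := by
      simp [f₁, map_ofNat]; try ring
    constructor
    · refine ⟨X ^ 7 - (23 * X ^ 4) - (28 * X ^ 3) - (33 * X ^ 2) - (17 * X) + (1), by monicity!, ?_⟩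
      rw [← aeval_def]
      simp only [map_add, map_sub, map_mul, map_pow, aeval_X, map_ofNat, map_one]
      rw [hx]
      linear_combination ((1 : K)) * hpθ
    · have hprod : (aeval θ f₁) * ((-1 : K) * θ ^ 6 + (23 : K) * θ ^ 3 + (28 : K) * θ ^ 2 + (33 : K) * θ + (17 : K)) = 1 := by
        rw [hx]
        linear_combination ((-1 : K)) * hpθ
      rw [inv_eq_of_mul_eq_one_right hprod]
      refine ⟨X ^ 7 - (17 * X ^ 6) - (33 * X ^ 5) - (28 * X ^ 4) - (23 * X ^ 3) + (1), by monicity!, ?_⟩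
      rw [← aeval_def]
      simp only [map_add, map_sub, map_mul, map_pow, aeval_X, map_ofNat, map_one]
      linear_combination ((-1 : K) * θ ^ 35 + (138 : K) * θ ^ 32 + (168 : K) * θ ^ 31 + (198 : K) * θ ^ 30 + (-7850 : K) * θ ^ 29 + (-19319 : K) * θ ^ 28 + (-34530 : K) * θ ^ 27 + (205845 : K) * θ ^ 26 + (860370 : K) * θ ^ 25 + (2115175 : K) * θ ^ 24 + (-761707 : K) * θ ^ 23 + (-16285398 : K) * θ ^ 22 + (-57617801 : K) * θ ^ 21 + (-87425528 : K) * θ ^ 20 + (30267330 : K) * θ ^ 19 + (589130842 : K) * θ ^ 18 + (1753175834 : K) * θ ^ 17 + (2967873896 : K) * θ ^ 16 + (2050671058 : K) * θ ^ 15 + (-4918919090 : K) * θ ^ 14 + (-22168842321 : K) * θ ^ 13 + (-51103161798 : K) * θ ^ 12 + (-87348458338 : K) * θ ^ 11 + (-120801334595 : K) * θ ^ 10 + (-139714036209 : K) * θ ^ 9 + (-137025102152 : K) * θ ^ 8 + (-114372818720 : K) * θ ^ 7 + (-80944612421 : K) * θ ^ 6 + (-48058521798 : K) * θ ^ 5 +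 (-23465559321 : K) * θ ^ 4 + (-9113192533 : K) * θ ^ 3 + (-2655007148 : K) * θ ^ 2 + (-515265308 : K) * θ + (-49306867 : K)) * hpθ
  · -- f2
    have hx : aeval θ f₂ = (38/3 : K) * θ ^ 6 + (2/3 : K) * θ ^ 5 + (-1/3 : K) * θ ^ 4 + (-872/3 : K) * θ ^ 3 + (-1108/3 : K) * θ ^ 2 + (-1309/3 : K) * θ + (-713/3 : K) := by
      simp [f₂, map_ofNat]; try ring
    constructor
    · refine ⟨X ^ 7 + (253 * X ^ 6) - (1950 * X ^ 5) + (104787 * X ^ 4) + (978995 * X ^ 3) - (116325 * X ^ 2) + (18434 * X) + (1), by monicity!, ?_⟩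
      rw [← aeval_def]
      simp only [map_add, map_sub, map_mul, map_pow, aeval_X, map_ofNat, map_one]
      rw [hx]
      linear_combination ((114415582592/2187 : K) * θ ^ 35 + (42153109376/2187 : K) * θ ^ 34 + (-14420800576/2187 : K) * θ ^ 33 + (-194484804992/27 : K) * θ ^ 32 + (-8327554480672/729 : K) * θ ^ 31 + (-9400278930464/729 : K) * θ ^ 30 + (295937233924592/729 : K) * θ ^ 29 + (844226610130784/729 : K) * θ ^ 28 + (1563383953163192/729 : K) * θ ^ 27 + (-272844571983640/27 : K) * θ ^ 26 + (-35582357552545988/729 : K) * θ ^ 25 + (-92020258524573416/729 : K) * θ ^ 24 + (930355599425438/2187 : K) * θ ^ 23 + (1891288507921632494/2187 : K) * θ ^ 22 + (7242828109020828095/2187 : K) * θ ^ 21 + (4114773037923716530/729 : K) * θ ^ 20 + (45099782194492106/729 : K) * θ ^ 19 + (-7618057649133010616/243 : K) * θ ^ 18 + (-8322052748830485680/81 : K) * θ ^ 17 + (-137185692438794004935/729 : K) * θ ^ 16 + (-118599795554104001840/729 : K) * θ ^ 15 + (483062530986863096543/2187 : K) * θ ^ 14 + (2750066509089595741616/2187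 : K) * θ ^ 13 + (6770939137411401752615/2187 : K) * θ ^ 12 + (12077046989933305070786/2187 : K) * θ ^ 11 + (17297594624022479267192/2187 : K) * θ ^ 10 + (20652958989544806494579/2187 : K) * θ ^ 9 + (20879885687424818955085/2187 : K) * θ ^ 8 + (17955738949932720854866/2187 : K) * θ ^ 7 + (13092918260131623088213/2187 : K) * θ ^ 6 + (8013303407211778441346/2187 : K) * θ ^ 5 + (4037838108219846058247/2187 : K) * θ ^ 4 + (1621178469540713930696/2187 : K) * θ ^ 3 + (489796286216822348602/2187 : K) * θ ^ 2 + (99148346571460853824/2187 : K) * θ + (9979907594915817532/2187 : K)) * hpθ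
    · have hprod : (aeval θ f₂) * ((-2345/3 : K) * θ ^ 6 + (1720/3 : K) * θ ^ 5 + (-1262/3 : K) * θ ^ 4 + (54860/3 : K) * θ ^ 3 + (25423/3 : K) * θ ^ 2 + (58747/3 : K) * θ + (-3199/3 : K)) = 1 := by
        rw [hx]
        linear_combination ((-89110/9 : K) * θ ^ 5 + (60670/9 : K) * θ ^ 4 + (-14057/3 : K) * θ ^ 3 + (2075746/9 : K) * θ ^ 2 + (119534 : K) * θ + (2280878/9 : K)) * hpθ
      rw [inv_eq_of_mul_eq_one_right hprod]
      refine ⟨X ^ 7 + (18434 * X ^ 6) - (116325 * X ^ 5) + (978995 * X ^ 4) + (104787 * X ^ 3) - (1950 * X ^ 2) + (253 * X) + (1), by monicity!, ?_⟩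
      rw [← aeval_def]
      simp only [map_add, map_sub, map_mul, map_pow, aeval_X, map_ofNat, map_one]
      linear_combination ((-389941923248634327265625/2187 : K) * θ ^ 35 + (2002089874590003113125000/2187 : K) * θ ^ 34 + (-5874426738960704354281250/2187 : K) * θ ^ 33 + (22246306356037054454734375/729 : K) * θ ^ 32 + (-26053413418898533716934375/243 : K) * θ ^ 31 + (196589474718834994572781250/729 : K) * θ ^ 30 + (-1431575421196444023056659375/729 : K) * θ ^ 29 + (3481537512525805565201706250/729 : K) * θ ^ 28 + (-2737268437811449789750982500/243 : K) * θ ^ 27 + (47077241550151787778605633125/729 : K) * θ ^ 26 + (-24125898560882103080844662825/243 : K) * θ ^ 25 + (197975323895013753050761916950/729 : K) * θ ^ 24 + (-2553966099608767587594183239285/2187 : K) * θ ^ 23 + (1945668929803999492975235623135/2187 : K) * θ ^ 22 + (-9794446545106465228240102738943/2187 : K) * θ ^ 21 + (7620682826608645318396414867490/729 : K) * θ ^ 20 + (-1827206889576770958316039354567/729 : K) * θ ^ 19 + (35823243562976140210901347863539/729 : K) * θ ^ 18 + (-4299474535132192665622112912369/243 : K) * θ ^ 17 + (11106498109871212683070586220406/243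 : K) * θ ^ 16 + (-161920501351120734036427761477355/729 : K) * θ ^ 15 + (-466324435803735292367969532507308/2187 : K) * θ ^ 14 + (-1587522899199804678458329815672593/2187 : K) * θ ^ 13 + (-1412615177701414116180912811794356/2187 : K) * θ ^ 12 + (-2383527893159386708379687901018374/2187 : K) * θ ^ 11 + (-1567011471250038711314371645416164/2187 : K) * θ ^ 10 + (-1811216073283383498081178720174631/2187 : K) * θ ^ 9 + (-729417884153771475724355769933244/2187 : K) * θ ^ 8 + (-648218416207536812551321749136267/2187 : K) * θ ^ 7 + (-66229314205976918963224460536807/2187 : K) * θ ^ 6 + (-82396397470479424928008908482267/2187 : K) * θ ^ 5 + (28626434990450269218469863162655/2187 : K) * θ ^ 4 + (-3357421094354873891952169959782/2187 : K) * θ ^ 3 + (188094866059798090338595447850/2187 : K) * θ ^ 2 + (-5166924817211028773609552308/2187 : K) * θ + (56193864114317365837699364/2187 : K)) * hpθ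
  · -- f3
    have hx : aeval θ f₃ = (842/3 : K) * θ ^ 6 + (5072/3 : K) * θ ^ 5 + (-6847/3 : K) * θ ^ 4 + (-46061/3 : K) * θ ^ 3 + (-34930/3 : K) * θ ^ 2 + (-52216/3 : K) * θ + (2878/3 : K) := by
      simp [f₃, map_ofNat]; try ring
    constructor
    · refine ⟨X ^ 7 + (555303 * X ^ 6) + (92085427645 * X ^ 5) - (1243944112259662 * X ^ 4) + (88938805165133 * X ^ 3) + (297516586466 * X ^ 2) + (656886612 * X) + (1), by monicity!, ?_⟩
      rw [← aeval_def]
      simp only [map_add, map_sub, map_mul, map_pow, aeval_X, map_ofNat, map_one]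
      rw [hx]
      linear_combination ((300043788539595179648/2187 : K) * θ ^ 35 + (12651727634572193893376/2187 : K) * θ ^ 34 + (211553312288285326503872/2187 : K) * θ ^ 33 + (523364259613910737038400/729 : K) * θ ^ 32 + (335692568681508685149664/729 : K) * θ ^ 31 + (-22373086247485378438507648/729 : K) * θ ^ 30 + (-45646595835052738151387440/243 : K) * θ ^ 29 + (24805076773578977619932912/729 : K) * θ ^ 28 + (3322731622416935043059794424/729 : K) * θ ^ 27 + (10621888701079332733430224064/729 : K) * θ ^ 26 + (-21375224169036197219239847572/729 : K) * θ ^ 25 + (-197165716754047028328050321636/729 : K) * θ ^ 24 + (-767376943819378306578613794418/2187 : K) * θ ^ 23 + (3697869197818193766907700266904/2187 : K) * θ ^ 22 + (14955225644874438053617069135487/2187 : K) * θ ^ 21 + (2888041072716425764459236773893/729 : K) * θ ^ 20 + (-8813481556835517506949624643403/243 : K) * θ ^ 19 + (-78792538876027098646506273398476/729 : K) * θ ^ 18 + (-21884737330556784536350718901113/729 : K) * θ ^ 17 + (336555893218602785512218150549059/729 : K) * θ ^ 16 + (713585941874981868712436170781914/729 : K) * θ ^ 15 + (589240529844409413612552876288707/2187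 : K) * θ ^ 14 + (-5143002244570982089961442645670735/2187 : K) * θ ^ 13 + (-12673878121338807765856572498165385/2187 : K) * θ ^ 12 + (-12863020870024147699013649470701012/2187 : K) * θ ^ 11 + (5108758079770615599611306480336999/2187 : K) * θ ^ 10 + (36945422914725411262804400876989514/2187 : K) * θ ^ 9 + (72358296961541539808387339935217881/2187 : K) * θ ^ 8 + (91629691977089873751515321481724762/2187 : K) * θ ^ 7 + (79947513154597607463041473730509696/2187 : K) * θ ^ 6 + (58822332003944357864943802182790382/2187 : K) * θ ^ 5 + (22413485116783650807342564827671772/2187 : K) * θ ^ 4 + (9594560694341847473457752702277893/2187 : K) * θ ^ 3 + (-2005970029191638492904929733162602/2187 : K) * θ ^ 2 + (115896318979915667789463603719491/2187 : K) * θ + (-2139481186066297550271566715437/2187 : K)) * hpθ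
    · have hprod : (aeval θ f₃) * ((-462293/3 : K) * θ ^ 6 + (-1513589/3 : K) * θ ^ 5 + (-4955894/3 : K) * θ ^ 4 + (-5594680/3 : K) * θ ^ 3 + (-5377220/3 : K) * θ ^ 2 + (-2356310/3 : K) * θ + (141182/3 : K)) = 1 := by
        rw [hx]
        linear_combination ((-389250706/9 : K) * θ ^ 5 + (-3619192034/9 : K) * θ ^ 4 + (-964940665 : K) * θ ^ 3 + (-7142559410/9 : K) * θ ^ 2 + (-805105457 : K) * θ + (406321787/9 : K)) * hpθ
      rw [inv_eq_of_mul_eq_one_right hprod]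
      refine ⟨X ^ 7 + (656886612 * X ^ 6) + (297516586466 * X ^ 5) + (88938805165133 * X ^ 4) - (1243944112259662 * X ^ 3) + (92085427645 * X ^ 2) + (555303 * X) + (1), by monicity!, ?_⟩
      rw [← aeval_def]
      simp only [map_add, map_sub, map_mul, map_pow, aeval_X, map_ofNat, map_one]
      linear_combination ((-4512541636238779749375404497202926475357/2187 : K) * θ ^ 35 + (-103421279748062654668233314851443050114027/2187 : K) * θ ^ 34 + (-1354460656588511775304119423493043383846955/2187 : K) * θ ^ 33 + (-4227160465672634309192190251147398641143954/729 : K) * θ ^ 32 + (-31290480328182329390525322521229222864737090/729 : K) * θ ^ 31 + (-193088989312648575000224716021145328770228551/729 : K) * θ ^ 30 + (-1023021922500384253351785738948413184979266019/729 : K) * θ ^ 29 + (-4741447423068246272023570549055538310402477546/729 : K) * θ ^ 28 + (-19411546243219527024954249439567315963755034547/729 : K) * θ ^ 27 + (-70644728319183618558892781291787370440938297546/729 : K) * θ ^ 26 + (-229195615859618429782971873451347430618279900271/729 : K) * θ ^ 25 + (-221424324538832657031047820071144075330063576785/243 : K) * θ ^ 24 + (-5163714705899865020316293792839641786944277497672/2187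 : K) * θ ^ 23 + (-11971207787380861864993666878038665685915865740303/2187 : K) * θ ^ 22 + (-24833948672788481944765245902411593983368348150576/2187 : K) * θ ^ 21 + (-15367495649358289309710660841695605711480980527250/729 : K) * θ ^ 20 + (-25518732541867956331887710582296110498077399715301/729 : K) * θ ^ 19 + (-1402818678261562230881587171201286375755212923450/27 : K) * θ ^ 18 + (-16724722520619905617916935842610466156732107526945/243 : K) * θ ^ 17 + (-19727721988021669125335710556827639708900391401436/243 : K) * θ ^ 16 + (-20647715945565668865402620635191388169645830523983/243 : K) * θ ^ 15 + (-171685437370938154996671018114161488931305438601852/2187 : K) * θ ^ 14 + (-138980703687566023568453338586654373283985015011424/2187 : K) * θ ^ 13 + (-97520933824031493559981571955549011027335105116437/2187 : K) * θ ^ 12 + (-58385149222245882332538756235656940526547203622197/2187 : K) * θ ^ 11 + (-29112359343973025673068114414819687443353778726616/2187 : K) * θ ^ 10 + (-11615206475179466737152683773755284126361572428460/2187 : K) * θ ^ 9 + (-3438873994803578984182515383635865461728934299358/2187 : K) * θ ^ 8 + (-623721555204205070109819304174426644618409126057/2187 : K) * θ ^ 7 + (-13653111273118764102473594745390581985716378506/2187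 : K) * θ ^ 6 + (19663217278900371333375469915258594058804426233/2187 : K) * θ ^ 5 + (1353860546378348961722434075933496501131076236/2187 : K) * θ ^ 4 + (-519542739861197316952428611669051150202581477/2187 : K) * θ ^ 3 + (40327629767202241453096344003102092303904512/2187 : K) * θ ^ 2 + (-1307598678172753110593378220717993639267193/2187 : K) * θ + (15758122800003382485643029134316283591721/2187 : K)) * hpθ
  · -- f4
    have hx : aeval θ f₄ = (4260971/3 : K) * θ ^ 6 + (-3124108/3 : K) * θ ^ 5 + (2290532/3 : K) * θ ^ 4 + (-99681839/3 : K) * θ ^ 3 + (-46221667/3 : K) * θ ^ 2 + (-106722952/3 : K) * θ + (5811547/3 : K) := by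
      simp [f₄, map_ofNat]; try ring
    constructor
    · refine ⟨X ^ 7 - (33491907 * X ^ 6) - (121655494329 * X ^ 5) - (7926275783452 * X ^ 4) - (348623908583443 * X ^ 3) - (1488275841868170 * X ^ 2) + (73340602 * X) - (1), by monicity!, ?_⟩
      rw [← aeval_def]
      simp only [map_add, map_sub, map_mul, map_pow, aeval_X, map_ofNat, map_one]
      rw [hx]
      linear_combination ((25501166624070523924292580171115005959336590691/2187 : K) * θ ^ 35 + (-130880682036357913370571381117719954738785554676/2187 : K) * θ ^ 34 + (383840872119074427216338992843247310269793364748/2187 : K) * θ ^ 33 + (-484827503731274282422935580406636144522213299468/243 : K) * θ ^ 32 + (5108296095457484776155533951794786405892561108753/729 : K) * θ ^ 31 + (-12842519316406546892194091975664115822934300981339/729 : K) * θ ^ 30 + (93583443857211913611793735575416677070906835652826/729 : K) * θ ^ 29 + (-227471346209267001863538145548336250706725203231556/729 : K) * θ ^ 28 + (536349556356863620375738503205998484104634493364596/729 : K) * θ ^ 27 + (-1025722124437554978495716315459070452673906371469992/243 : K) * θ ^ 26 + (4726224698727539386759618828417337435650129642811041/729 : K) * θ ^ 25 + (-12930489963505633501173713417775472592865473783107907/729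 : K) * θ ^ 24 + (166920290612080168072789768187487445329953713732512509/2187 : K) * θ ^ 23 + (-126845055279398149360355419825997326542046980577968793/2187 : K) * θ ^ 22 + (639906212845437849517963220593195635194148904669515731/2187 : K) * θ ^ 21 + (-497920567963228773916179555821331726736387052665163645/729 : K) * θ ^ 20 + (118131072155950520163289213004262760472421342017443349/729 : K) * θ ^ 19 + (-780496158924567548287456743617403556262789190606954104/243 : K) * θ ^ 18 + (279847058105243224333201721305486075932223757886511274/243 : K) * θ ^ 17 + (-2172639235336651592091773646596748613377179635593558209/729 : K) * θ ^ 16 + (10584806226366947320531550252000404711471222994283517927/729 : K) * θ ^ 15 + (30557072545841938091594775911725917418754900502372325892/2187 : K) * θ ^ 14 + (103810568141755020892957329548066341397493182138411522255/2187 : K) * θ ^ 13 + (92472834365023834023697403477991081408335406420990134093/2187 : K) * θ ^ 12 + (155844929098140967177668535028297732978583655578493239629/2187 : K) * θ ^ 11 + (102544987181740177549711628450424042868156539833700806684/2187 : K) * θ ^ 10 + (118389184066409551795750243028298060492467641781811280394/2187 : K) * θ ^ 9 + (47728602270954324929419650094502902984428637670074808176/2187 : K) * θ ^ 8 + (42348751985536839036332680654596151357069922071086720955/2187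 : K) * θ ^ 7 + (4343262130423344597032917442333996690259789997867772281/2187 : K) * θ ^ 6 + (5377429711440784465068903805795244206141430380939989506/2187 : K) * θ ^ 5 + (-1867379671704254157070132299031506567784610371406116504/2187 : K) * θ ^ 4 + (218851855434246611872429180604635701214020864193218887/2187 : K) * θ ^ 3 + (-12251295631223077970568391659094119514908231633605537/2187 : K) * θ ^ 2 + (336272751818125900898136826975968596553694021306231/2187 : K) * θ + (-3654261981533426648142503045207410988960178090257/2187 : K)) * hpθ
    · have hprod : (aeval θ f₄) * ((1793188/3 : K) * θ ^ 6 + (3778267/3 : K) * θ ^ 5 + (-4185161/3 : K) * θ ^ 4 + (-43359991/3 : K) * θ ^ 3 + (-131039099/3 : K) * θ ^ 2 + (-69577808/3 : K) * θ + (4070090/3 : K)) = 1 := by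
        rw [hx]
        linear_combination ((7640722065548/9 : K) * θ ^ 5 + (10496973140953/9 : K) * θ ^ 4 + (-8509736438717/3 : K) * θ ^ 3 + (-166038197786957/9 : K) * θ ^ 2 + (-145538964152633/3 : K) * θ + (23653519329221/9 : K)) * hpθ
      rw [inv_eq_of_mul_eq_one_right hprod]
      refine ⟨X ^ 7 - (73340602 * X ^ 6) + (1488275841868170 * X ^ 5) + (348623908583443 * X ^ 4) + (7926275783452 * X ^ 3) + (121655494329 * X ^ 2) + (33491907 * X) - (1), by monicity!, ?_⟩
      rw [← aeval_def]
      simp only [map_add, map_sub, map_mul, map_pow, aeval_X, map_ofNat, map_one]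
      linear_combination ((59618461886791976901409663656710553644449792/2187 : K) * θ ^ 35 + (879317321978156799699478637893372972441194496/2187 : K) * θ ^ 34 + (4584180147031552906614190022885589843112551424/2187 : K) * θ ^ 33 + (-504960453007366820841949976828508728595920128/729 : K) * θ ^ 32 + (-51030921676370590200251672838089369133946821824/729 : K) * θ ^ 31 + (-286258652437434275616884770469823740595184775984/729 : K) * θ ^ 30 + (-148182253688128601968156870864230109378678901908/243 : K) * θ ^ 29 + (1027680969042838734781278765776788160125090812499/243 : K) * θ ^ 28 + (7307288687695218159269258928919741461546190297373/243 : K) * θ ^ 27 + (54519438892397337728683335832844861858666898445222/729 : K) * θ ^ 26 + (-15974059190733699786389627500026976519863870791657/243 : K) * θ ^ 25 + (-276459719319339984922378980918253109072357233899026/243 : K) * θ ^ 24 + (-8351966846850527084591289998405093252605834636457054/2187 : K) * θ ^ 23 + (-8311154148307755236472390557674983737832045673554755/2187 : K) * θ ^ 22 + (40972796585609751235321151600511630532528971348313882/2187 : K) * θ ^ 21 + (69872817131759284014008170926675054483896755514676392/729 : K) * θ ^ 20 + (47731501749223961350554115333239113579799968038379776/243 : K) * θ ^ 19 + (3310932390297595844865160258765869105700965237791867/81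 : K) * θ ^ 18 + (-725396515762310283913754199462405842579772501912348859/729 : K) * θ ^ 17 + (-2398981833131032300439967238735072672268206439276665769/729 : K) * θ ^ 16 + (-3845487109741721112222161066278254098130565174435198616/729 : K) * θ ^ 15 + (-3982838853704191490706671833909020088093091521632178475/2187 : K) * θ ^ 14 + (30504546897368921124695810200022664941089199956493364571/2187 : K) * θ ^ 13 + (95709767951580156155394005895814659659252249719326979081/2187 : K) * θ ^ 12 + (170005986677727279901893023850822865247930078711218965595/2187 : K) * θ ^ 11 + (214552457412154212692740563886860271587590441618819345791/2187 : K) * θ ^ 10 + (204511961793774142075862655057455075266638980350983960718/2187 : K) * θ ^ 9 + (149896381351905789429352893638104271654226921524453649554/2187 : K) * θ ^ 8 + (82081115427602873775212601693101389656832107873041559263/2187 : K) * θ ^ 7 + (29824048924293891331686257261448253955550358483973219669/2187 : K) * θ ^ 6 + (4986514707715226519581306629036196253726186447987491576/2187 : K) * θ ^ 5 + (-433334182228227273775878339922365980352303883259560619/2187 : K) * θ ^ 4 + (-164603759746145511978564475803246407668963329463723421/2187 : K) * θ ^ 3 + (21698736465191591925158442786502345622083403133659489/2187 : K) * θ ^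 2 + (-940725534758652366092171251446410383255307440356193/2187 : K) * θ + (13978794625493013350218957451751525517990491554783/2187 : K)) * hpθ
end

section
/- Let A be the explicit 7×7 integer matrix given in the context and let f₁, f₂, f₃, f₄ be the rational polynomials given in the context. For each i ∈ {1,2,3,4}: the matrix fᵢ(A) (a 7×7 matrix over ℚ) is invertible, the matrices Rᵢ′ = 9·fᵢ(A) and Sᵢ′ = 9·fᵢ(A)⁻¹·A have all entries in ℤ, and sgc₂(Rᵢ′, Sᵢ′) = 0 in ℤ/2ℤ. -/
open Polynomial

def Amat : Matrix (Fin 7) (Fin 7) ℤ :=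
  !![0,0,1,1,3,0,0; 1,0,0,0,3,0,0; 0,1,0,0,3,0,0; 0,0,1,0,3,0,0;
     0,0,0,0,0,0,1; 1,1,1,1,10,0,0; 1,1,1,1,0,1,0]

/-- The matrix `A` viewed as a matrix over `ℚ`. -/
def AmatQ : Matrix (Fin 7) (Fin 7) ℚ := Amat.map (Int.cast : ℤ → ℚ)

/-! Write `fᵢ = gᵢ / 3` with `gᵢ ∈ ℤ[X]`, so that `R′ = 9 fᵢ(A) = 3 gᵢ(A)` is integral. Since `A` is
unimodular, an integral matrix `S` with `R′ S = 81 A` shows at once that `fᵢ(A)` is invertible and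
that `9 fᵢ(A)⁻¹ A = S`; so each case reduces to exhibiting `S` and checking `R′ S = 81 A` and
`sgc₂(R′, S) = 0` by integer arithmetic. -/

section

variable {n : Type*} [Fintype n] [DecidableEq n] {K : Type*} [Field K]

theorem Matrix.isUnit_and_inv_mul_eq_of_mul_eq_smul {M A S : Matrix n n K} {c : K}
    (hA : IsUnit A) (hc : c ≠ 0) (h : M * S = c • A) : IsUnit M ∧ M⁻¹ * A = c⁻¹ • S := by
  have hright : M * (c⁻¹ • (S * A⁻¹)) = 1 := by
    rw [Matrix.mul_smul, ← Matrix.mul_assoc, h, Matrix.smul_mul, smul_smul, inv_mul_cancel₀ hc,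
      one_smul, Matrix.mul_nonsing_inv _ ((Matrix.isUnit_iff_isUnit_det A).1 hA)]
  have hM : IsUnit M.det := Matrix.isUnit_det_of_right_inverse hright
  refine ⟨(Matrix.isUnit_iff_isUnit_det M).2 hM, ?_⟩
  have hA' : A = c⁻¹ • (M * S) := by rw [h, smul_smul, inv_mul_cancel₀ hc, one_smul]
  rw [hA', Matrix.mul_smul, Matrix.nonsing_inv_mul_cancel_left M S hM]

theorem Matrix.isUnit_map_intCast_of_mul_eq_one {R : Type*} [Ring R] {A B : Matrix n n ℤ}
    (h : A * B = 1) : IsUnit (A.map (Int.cast : ℤ → R)) := by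
  have hA : IsUnit A := (Matrix.isUnit_iff_isUnit_det A).2 (Matrix.isUnit_det_of_right_inverse h)
  exact hA.map (Int.castRingHom R).mapMatrix

theorem Polynomial.aeval_map_intCast_matrix {R : Type*} [CommRing R] (A : Matrix n n ℤ)
    (g : ℤ[X]) :
    aeval (A.map (Int.cast : ℤ → R)) (g.map (Int.castRingHom R)) = (aeval A g).map Int.cast := by
  rw [← algebraMap_int_eq, aeval_map_algebraMap]
  exact aeval_algHom_apply (Int.castRingHom R).toIntAlgHom.mapMatrix A g

variable [CharZero K]

theorem Polynomial.map_smul_aeval_eq_smul_aeval_of_eq_C_mul_map {A : Matrix n n ℤ} {f : K[X]}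
    {g : ℤ[X]} (hfg : f = C (1 / 3) * g.map (Int.castRingHom K)) :
    ((3 : ℤ) • aeval A g).map (Int.cast : ℤ → K) = (9 : K) • aeval (A.map Int.cast) f := by
  subst hfg
  rw [map_mul, aeval_C, aeval_map_intCast_matrix, Algebra.algebraMap_eq_smul_one, smul_mul_assoc,
    one_mul, smul_smul]
  ext i j
  simp only [Matrix.map_apply, Matrix.smul_apply, smul_eq_mul, Int.cast_mul, Int.cast_ofNat]
  ring

theorem Matrix.isUnit_and_map_eq_smul_inv_mul_of_mul_eq {M : Matrix n n K}
    {A R S : Matrix n n ℤ} (hA : IsUnit (A.map (Int.cast : ℤ → K)))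
    (hR : R.map (Int.cast : ℤ → K) = (9 : K) • M) (hRS : R * S = (81 : ℤ) • A) :
    IsUnit M ∧ S.map (Int.cast : ℤ → K) = (9 : K) • (M⁻¹ * A.map Int.cast) := by
  have hMS : M * S.map (Int.cast : ℤ → K) = (9 : K) • A.map Int.cast := by
    have h := congrArg (Int.castRingHom K).mapMatrix hRS
    simp only [map_mul, map_zsmul, RingHom.mapMatrix_apply, Int.coe_castRingHom, hR] at h
    rw [Matrix.smul_mul, ← Int.cast_smul_eq_zsmul K, Int.cast_ofNat,
      show (81 : K) = 9 * 9 by norm_num, ← smul_smul] at h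
    exact smul_right_injective _ (by norm_num : (9 : K) ≠ 0) h
  obtain ⟨hM, hinv⟩ := isUnit_and_inv_mul_eq_of_mul_eq_smul hA (by norm_num) hMS
  refine ⟨hM, ?_⟩
  rw [hinv, smul_smul, mul_inv_cancel₀ (by norm_num), one_smul]

end

def AmatInv : Matrix (Fin 7) (Fin 7) ℤ :=
  !![3, 4, 3, 0, 0, -3, 0;
     3, 3, 4, 0, 0, -3, 0;
     3, 3, 3, 1, 0, -3, 0;
     1, 0, 0, -1, 0, 0, 0;
     -1, -1, -1, 0, 0, 1, 0;
     -10, -10, -10, 0, 0, 9, 1;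
     0, 0, 0, 0, 1, 0, 0]

theorem Amat_mul_AmatInv : Amat * AmatInv = 1 := by decide

noncomputable def g₁ : ℤ[X] := 3 * X

noncomputable def g₂ : ℤ[X] :=
  38 * X ^ 6 + 2 * X ^ 5 - X ^ 4 - 872 * X ^ 3 - 1108 * X ^ 2 - 1309 * X - 713

noncomputable def g₃ : ℤ[X] :=
  842 * X ^ 6 + 5072 * X ^ 5 - 6847 * X ^ 4 - 46061 * X ^ 3 - 34930 * X ^ 2 - 52216 * X + 2878

noncomputable def g₄ : ℤ[X] :=
  4260971 * X ^ 6 - 3124108 * X ^ 5 + 2290532 * X ^ 4 - 99681839 * X ^ 3 - 46221667 * X ^ 2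
    - 106722952 * X + 5811547

def S₁ : Matrix (Fin 7) (Fin 7) ℤ := 9

def S₂ : Matrix (Fin 7) (Fin 7) ℤ :=
  !![16362, -12906, 8613, -23580, 1782, 3321, -2430;
     -24669, 19395, -12906, 35514, -2682, -5004, 3663;
     31392, -24669, 16362, -45099, 3411, 6354, -4662;
     -45099, 35514, -23580, 64782, -4914, -9126, 6696;
     564, -447, 297, -810, 60, 114, -84;
     22317, -17574, 11664, -32058, 2427, 4515, -3315;
     -417, 327, -216, 594, -48, -84, 60]

def S₃ : Matrix (Fin 7) (Fin 7) ℤ :=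
  !![-1689485220, -1799904177, -2161447587, -1655765838, -9361019988, -873127674, -2858910363;
     -1406890674, -1498835403, -1799904177, -1378809423, -7795217691, -727080903, -2380704624;
     -1320584076, -1406890674, -1689485220, -1294222428, -7317011952, -682477857, -2234657853;
     -1294222428, -1378809423, -1655765838, -1268390466, -7170965181, -668855556, -2190054807;
     -972378570, -1035928509, -1244012679, -952970121, -5387702691, -502525650, -1645435776;
     -4713930174, -5022008907, -6030765576, -4619840247, -26118685407, -2436160701, -7976798490;
     -3183889935, -3391974105, -4073310117, -3120339996, -17641126137, -1645435776, -5387702691]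

def S₄ : Matrix (Fin 7) (Fin 7) ℤ :=
  !![-157730283, -114082452, 205797888, 135906957, 14881779, -24795747, 25670574;
     196285455, -101013831, -114082452, 45095184, 22710258, -5745744, -28962180;
     48757230, 196285455, -157730283, -183973383, -31922496, 31920705, -9912177;
     -183973383, 45095184, 135906957, 1447353, -12872493, -2083698, 27754272;
     7336176, -11569308, 291609, 8556858, 2171283, -1388811, -986772;
     95761518, -11582394, -77691897, -11236491, 4682769, 2875767, -14592594;
     -13944891, -2083974, 13517451, 4960593, -42105, -986772, 2171283]

def IsUnitEdgeCertificate (f : ℚ[X]) (g : ℤ[X]) (S : Matrix (Fin 7) (Fin 7) ℤ) : Prop :=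
  f = C (1 / 3) * g.map (Int.castRingHom ℚ) ∧ ((3 : ℤ) • aeval Amat g) * S = (81 : ℤ) • Amat ∧
    sgc2 ((3 : ℤ) • aeval Amat g) S = 0

theorem isUnitEdgeCertificate_f₁ : IsUnitEdgeCertificate f₁ g₁ S₁ := by
  refine ⟨?_, ?_, ?_⟩
  · rw [f₁, g₁, Polynomial.map_mul, Polynomial.map_ofNat, Polynomial.map_X, ← mul_assoc, ← C_ofNat,
      ← C_mul]
    norm_num
  all_goals simp only [g₁, map_mul, aeval_X, map_ofNat]; decide

theorem isUnitEdgeCertificate_f₂ : IsUnitEdgeCertificate f₂ g₂ S₂ := by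
  refine ⟨by simp [f₂, g₂], ?_, ?_⟩ <;>
    simp only [g₂, map_add, map_sub, map_mul, map_pow, aeval_X, map_ofNat] <;> decide

theorem isUnitEdgeCertificate_f₃ : IsUnitEdgeCertificate f₃ g₃ S₃ := by
  refine ⟨by simp [f₃, g₃], ?_, ?_⟩ <;>
    simp only [g₃, map_add, map_sub, map_mul, map_pow, aeval_X, map_ofNat] <;> decide

theorem isUnitEdgeCertificate_f₄ : IsUnitEdgeCertificate f₄ g₄ S₄ := by
  refine ⟨by simp [f₄, g₄], ?_, ?_⟩ <;>
    simp only [g₄, map_add, map_sub, map_mul, map_pow, aeval_X, map_ofNat] <;> decide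

/-- For each `i ∈ {1,2,3,4}`, the matrix `fᵢ(A)` over `ℚ` is invertible, the
matrices `Rᵢ′ = 9·fᵢ(A)` and `Sᵢ′ = 9·fᵢ(A)⁻¹·A` are integral, and
`sgc₂(Rᵢ′, Sᵢ′) = 0`. -/
theorem sgc2_vanishes_on_unit_edges :
    ∀ f ∈ [f₁, f₂, f₃, f₄],
      IsUnit (Polynomial.aeval AmatQ f) ∧
      ∃ (R' S' : Matrix (Fin 7) (Fin 7) ℤ),
        R'.map (Int.cast : ℤ → ℚ) = (9 : ℚ) • Polynomial.aeval AmatQ f ∧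
        S'.map (Int.cast : ℤ → ℚ) = (9 : ℚ) • ((Polynomial.aeval AmatQ f)⁻¹ * AmatQ) ∧
        sgc2 R' S' = 0 := by
  intro f hf
  obtain ⟨g, S, hfg, hRS, hsgc⟩ : ∃ g S, IsUnitEdgeCertificate f g S := by
    simp only [List.mem_cons, List.not_mem_nil, or_false] at hf
    rcases hf with rfl | rfl | rfl | rfl
    exacts [⟨_, _, isUnitEdgeCertificate_f₁⟩, ⟨_, _, isUnitEdgeCertificate_f₂⟩,
      ⟨_, _, isUnitEdgeCertificate_f₃⟩, ⟨_, _, isUnitEdgeCertificate_f₄⟩]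
  have hR := map_smul_aeval_eq_smul_aeval_of_eq_C_mul_map (A := Amat) hfg
  obtain ⟨hunit, hS⟩ := Matrix.isUnit_and_map_eq_smul_inv_mul_of_mul_eq
    (Matrix.isUnit_map_intCast_of_mul_eq_one Amat_mul_AmatInv) hR hRS
  exact ⟨hunit, _, S, hR, hS, hsgc⟩
end
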